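/- arXiv:1909.11924 — 7 statements merged into one kernel-verified Lean document; each statement's English description precedes it below -/
import Mathlib

section
/- Let g : ℝ^n → ℝ be convex, let Y ⊆ ℝ^n be a nonempty closed convex set, and let x ∈ Y. Let g⁺(x) = max(0, g(x)). Let β > 0 and let d be a subgradient of g⁺ at x if g⁺(x) > 0, and d ≠ 0 arbitrary otherwise. Define z = Π_Y[x − β (g⁺(x)/‖d‖²) d], where Π_Y denotes the orthogonal projection onto Y. Then for every y ∈ Y with g⁺(y) = 0 one has ‖z − y‖² ≤ ‖x − y‖² − β(2 − β) (g⁺(x))²/‖d‖². -/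
open MeasureTheory Finset

noncomputable section

/-- Polyak subgradient feasibility step decrease (Lemma 1). -/
theorem stmt_0 {n : ℕ} (g : EuclideanSpace ℝ (Fin n) → ℝ)
    (hg : ConvexOn ℝ Set.univ g)
    (Y : Set (EuclideanSpace ℝ (Fin n))) (hYne : Y.Nonempty)
    (hYclosed : IsClosed Y) (hYconv : Convex ℝ Y)
    (P : EuclideanSpace ℝ (Fin n) → EuclideanSpace ℝ (Fin n))
    (hP : ∀ v, P v ∈ Y ∧ ∀ w ∈ Y, ‖P v - v‖ ≤ ‖w - v‖)
    (x : EuclideanSpace ℝ (Fin n)) (hx : x ∈ Y)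
    (β : ℝ) (hβ : 0 < β) (d : EuclideanSpace ℝ (Fin n))
    (hd : if 0 < max 0 (g x) then
        (∀ y, max 0 (g x) + (inner ℝ d (y - x) : ℝ) ≤ max 0 (g y)) else d ≠ 0)
    (z : EuclideanSpace ℝ (Fin n))
    (hz : z = P (x - (β * (max 0 (g x) / ‖d‖ ^ 2)) • d)) :
    ∀ y ∈ Y, max 0 (g y) = 0 →
      ‖z - y‖ ^ 2 ≤ ‖x - y‖ ^ 2 - β * (2 - β) * (max 0 (g x)) ^ 2 / ‖d‖ ^ 2 := by
  intro y hy hgy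
  -- Variational inequality for the projection
  have hvar : ∀ v, ∀ w ∈ Y, (inner ℝ (v - P v) (w - P v) : ℝ) ≤ 0 := by
    intro v w hw
    have hPv := (hP v).1
    have hmin : ‖v - P v‖ = ⨅ w : Y, ‖v - w‖ := by
      haveI : Nonempty Y := hYne.to_subtype
      apply le_antisymm
      · apply le_ciInf
        intro w'
        rw [norm_sub_rev v (P v), norm_sub_rev v w']
        exact (hP v).2 w' w'.2
      · calc (⨅ w : Y, ‖v - w‖) ≤ ‖v - (⟨P v, hPv⟩ : Y)‖ :=
              ciInf_le ⟨0, fun _ ⟨_, h⟩ => h ▸ norm_nonneg _⟩ _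
          _ = ‖v - P v‖ := rfl
    exact ((norm_eq_iInf_iff_real_inner_le_zero hYconv hPv).1 hmin) w hw
  -- nonexpansiveness at a fixed point: ‖P v - y‖² ≤ ‖v - y‖²
  have hnonexp : ∀ v, ‖P v - y‖ ^ 2 ≤ ‖v - y‖ ^ 2 := by
    intro v
    have h1 : (inner ℝ (v - P v) (y - P v) : ℝ) ≤ 0 := hvar v y hy
    have hdecomp : v - y = (v - P v) + (P v - y) := by abel
    have := @norm_add_sq_real (EuclideanSpace ℝ (Fin n)) _ _ (v - P v) (P v - y)
    rw [hdecomp, this]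
    have h2 : (inner ℝ (v - P v) (P v - y) : ℝ) = - (inner ℝ (v - P v) (y - P v) : ℝ) := by
      rw [← inner_neg_right]; congr 1; abel
    nlinarith [norm_nonneg (v - P v), sq_nonneg ‖v - P v‖]
  set a := max 0 (g x) with ha
  by_cases hpos : 0 < a
  · rw [if_pos hpos] at hd
    set t := β * (a / ‖d‖ ^ 2) with ht
    have hkey : (inner ℝ d (y - x) : ℝ) ≤ -a := by
      have := hd y
      rw [hgy] at this; linarith
    have hdne : d ≠ 0 := by
      intro h0
      rw [h0] at hkey
      simp at hkey; linarith
    have hDpos : (0:ℝ) < ‖d‖ ^ 2 := pow_pos (norm_pos_iff.2 hdne) 2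
    have hstep : ‖x - t • d - y‖ ^ 2 ≤ ‖x - y‖ ^ 2 - β * (2 - β) * a ^ 2 / ‖d‖ ^ 2 := by
      have hrw : x - t • d - y = (x - y) - t • d := by abel
      rw [hrw, @norm_sub_sq_real (EuclideanSpace ℝ (Fin n)) _ _ (x - y) (t • d)]
      have hinner : (inner ℝ (x - y) (t • d) : ℝ) = t * (inner ℝ (x - y) d : ℝ) := by
        rw [inner_smul_right]
      have hsym : (inner ℝ (x - y) d : ℝ) = - (inner ℝ d (y - x) : ℝ) := by
        rw [real_inner_comm, ← inner_neg_right]; congr 1; abel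
      have hge : a ≤ (inner ℝ (x - y) d : ℝ) := by rw [hsym]; linarith
      have hnt : ‖t • d‖ ^ 2 = t ^ 2 * ‖d‖ ^ 2 := by
        rw [norm_smul, mul_pow, Real.norm_eq_abs, sq_abs]
      rw [hinner, hnt, ht]
      have htpos : 0 < β * (a / ‖d‖ ^ 2) := mul_pos hβ (div_pos hpos hDpos)
      have hβa : β * (a / ‖d‖ ^ 2) * a = β * a ^ 2 / ‖d‖ ^ 2 := by
        field_simp
      have hsq : (β * (a / ‖d‖ ^ 2)) ^ 2 * ‖d‖ ^ 2 = β ^ 2 * a ^ 2 / ‖d‖ ^ 2 := by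
        field_simp
      have h2t : 2 * (β * (a / ‖d‖ ^ 2) * (inner ℝ (x - y) d : ℝ)) ≥
          2 * (β * a ^ 2 / ‖d‖ ^ 2) := by
        rw [← hβa]
        have := mul_le_mul_of_nonneg_left hge (le_of_lt htpos)
        linarith
      rw [hsq]
      have : β * (2 - β) * a ^ 2 / ‖d‖ ^ 2 =
          2 * (β * a ^ 2 / ‖d‖ ^ 2) - β ^ 2 * a ^ 2 / ‖d‖ ^ 2 := by ring
      linarith
    calc ‖z - y‖ ^ 2 = ‖P (x - t • d) - y‖ ^ 2 := by rw [hz]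
      _ ≤ ‖x - t • d - y‖ ^ 2 := hnonexp _
      _ ≤ _ := hstep
  · have ha0 : a = 0 := le_antisymm (not_lt.1 hpos) (le_max_left _ _)
    have hz' : z = P x := by
      rw [hz, ha0]; simp
    have hPx : P x = x := by
      have h1 := (hP x).2 x hx
      simp at h1
      exact sub_eq_zero.1 h1
    rw [hz', hPx, ha0]
    simp
end
end

section
/- Let g_ω, ω ∈ Ω, be convex functions on ℝ^n with subgradients bounded by M_g on a closed convex set Y, and let X* = Y ∩ (∩_ω {g_ω ≤ 0}) be nonempty. Let ω be a random index with distribution π, x ∈ Y, β ∈ (0,2), and define x⁺ = Π_Y[x − β (g_ω⁺(x)/‖d‖²) d], where d ∈ ∂g_ω⁺(x) if g_ω⁺(x) > 0 and d ≠ 0 arbitrary otherwise. Then E[dist²(x⁺, X*)] ≤ dist²(x, X*) − (β(2−β)/M_g²) E[(g_ω⁺(x))²]. -/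
open MeasureTheory Finset

noncomputable section

set_option maxHeartbeats 1000000 in
/-- One-step expected descent of the stochastic subgradient projection method (Lemma 4). -/
theorem stmt_7 {n : ℕ} {Ω : Type*} [MeasurableSpace Ω]
    (π : Measure Ω) [IsProbabilityMeasure π]
    (g : Ω → EuclideanSpace ℝ (Fin n) → ℝ)
    (hg : ∀ ω, ConvexOn ℝ Set.univ (g ω))
    (Y : Set (EuclideanSpace ℝ (Fin n))) (hYclosed : IsClosed Y) (hYconv : Convex ℝ Y)
    (M : ℝ) (hM : 0 < M)
    (hsub : ∀ ω, ∀ y ∈ Y, ∀ s : EuclideanSpace ℝ (Fin n),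
      (∀ v, g ω y + (inner ℝ s (v - y) : ℝ) ≤ g ω v) → ‖s‖ ≤ M)
    (Xs : Set (EuclideanSpace ℝ (Fin n)))
    (hXs : Xs = Y ∩ ⋂ ω, {x | g ω x ≤ 0}) (hne : Xs.Nonempty)
    (P : EuclideanSpace ℝ (Fin n) → EuclideanSpace ℝ (Fin n))
    (hP : ∀ v, P v ∈ Y ∧ ∀ w ∈ Y, ‖P v - v‖ ≤ ‖w - v‖)
    (x : EuclideanSpace ℝ (Fin n)) (hx : x ∈ Y)
    (β : ℝ) (hβ : β ∈ Set.Ioo (0 : ℝ) 2)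
    (d : Ω → EuclideanSpace ℝ (Fin n))
    (hd : ∀ ω, if 0 < max 0 (g ω x) then
        (∀ v, max 0 (g ω x) + (inner ℝ (d ω) (v - x) : ℝ) ≤ max 0 (g ω v))
      else d ω ≠ 0)
    (hint1 : Integrable (fun ω =>
      (Metric.infDist (P (x - (β * (max 0 (g ω x) / ‖d ω‖ ^ 2)) • d ω)) Xs) ^ 2) π)
    (hint2 : Integrable (fun ω => (max 0 (g ω x)) ^ 2) π) :
    ∫ ω, (Metric.infDist (P (x - (β * (max 0 (g ω x) / ‖d ω‖ ^ 2)) • d ω)) Xs) ^ 2 ∂π ≤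
      (Metric.infDist x Xs) ^ 2 - (β * (2 - β) / M ^ 2) * ∫ ω, (max 0 (g ω x)) ^ 2 ∂π := by
  obtain ⟨hβ0, hβ2⟩ := hβ
  -- continuity of each g ω
  have hgcont : ∀ ω, Continuous (g ω) := by
    intro ω
    have := (hg ω).continuousOn isOpen_univ
    rwa [← continuousOn_univ]
  -- Xs is closed
  have hXsclosed : IsClosed Xs := by
    rw [hXs]
    exact hYclosed.inter (isClosed_iInter fun ω => isClosed_le (hgcont ω) continuous_const)
  obtain ⟨y, hyXs, hy⟩ := hXsclosed.exists_infDist_eq_dist hne x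
  have hyY : y ∈ Y := by
    have := hXs ▸ hyXs; exact this.1
  have hgy : ∀ ω, g ω y ≤ 0 := by
    intro ω
    have h2 := (hXs ▸ hyXs).2
    exact Set.mem_iInter.mp h2 ω
  -- squared non-expansiveness of the projection
  have hproj : ∀ z, ∀ w ∈ Y, ‖P z - w‖ ^ 2 ≤ ‖z - w‖ ^ 2 := by
    intro z w hw
    obtain ⟨hPzY, hPzmin⟩ := hP z
    haveI : Nonempty Y := ⟨⟨P z, hPzY⟩⟩
    have hle1 : ‖z - P z‖ ≤ ⨅ w : Y, ‖z - w‖ := by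
      apply le_ciInf
      intro w
      have := hPzmin w w.2
      rwa [norm_sub_rev, norm_sub_rev (w : EuclideanSpace ℝ (Fin n)) z] at this
    have hbdd : BddBelow (Set.range fun w : Y => ‖z - w‖) :=
      ⟨0, fun b ⟨w, hw'⟩ => hw' ▸ norm_nonneg _⟩
    have hle2 : (⨅ w : Y, ‖z - w‖) ≤ ‖z - P z‖ := ciInf_le hbdd ⟨P z, hPzY⟩
    have hinf : ‖z - P z‖ = ⨅ w : Y, ‖z - w‖ := le_antisymm hle1 hle2
    have hchar := (norm_eq_iInf_iff_real_inner_le_zero hYconv hPzY).mp hinf w hw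
    have hsplit : z - w = (z - P z) + (P z - w) := by abel
    have hexp : ‖z - w‖ ^ 2 = ‖z - P z‖ ^ 2 + 2 * (inner ℝ (z - P z) (P z - w) : ℝ) + ‖P z - w‖ ^ 2 := by
      rw [hsplit, norm_add_sq_real]
    have hneg : (inner ℝ (z - P z) (P z - w) : ℝ) = - (inner ℝ (z - P z) (w - P z) : ℝ) := by
      rw [← inner_neg_right, neg_sub]
    nlinarith [sq_nonneg ‖z - P z‖]
  -- the pointwise key inequality
  have key : ∀ ω, (Metric.infDist (P (x - (β * (max 0 (g ω x) / ‖d ω‖ ^ 2)) • d ω)) Xs) ^ 2 ≤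
      (Metric.infDist x Xs) ^ 2 - (β * (2 - β) / M ^ 2) * (max 0 (g ω x)) ^ 2 := by
    intro ω
    by_cases hpos : 0 < max 0 (g ω x)
    · have hdsub := hd ω
      rw [if_pos hpos] at hdsub
      have hgx : 0 < g ω x := by
        rcases lt_max_iff.mp hpos with h | h
        · exact absurd h (lt_irrefl 0)
        · exact h
      have hmax : max 0 (g ω x) = g ω x := max_eq_right hgx.le
      -- d ω is a subgradient of g ω at x
      have hsubg : ∀ v, g ω x + (inner ℝ (d ω) (v - x) : ℝ) ≤ g ω v := by
        intro v
        have hline : Continuous fun t : ℝ => x + t • (v - x) :=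
          continuous_const.add (continuous_id.smul continuous_const)
        have hφ : Continuous fun t : ℝ => g ω (x + t • (v - x)) := (hgcont ω).comp hline
        have hopen : IsOpen {t : ℝ | 0 < g ω (x + t • (v - x))} :=
          isOpen_lt continuous_const hφ
        have h0mem : (0 : ℝ) ∈ {t : ℝ | 0 < g ω (x + t • (v - x))} := by
          show 0 < g ω (x + (0:ℝ) • (v - x))
          rw [zero_smul, add_zero]
          exact hgx
        obtain ⟨ε, hε, hball⟩ := Metric.isOpen_iff.mp hopen 0 h0mem
        set t := min ε 1 / 2 with ht
        have hmin : 0 < min ε 1 := lt_min hε one_pos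
        have ht0 : 0 < t := by rw [ht]; linarith
        have ht1 : t ≤ 1 := by
          have := min_le_right ε 1; rw [ht]; linarith
        have htε : t < ε := by
          have := min_le_left ε 1; rw [ht]; linarith
        have hmemball : t ∈ Metric.ball (0 : ℝ) ε := by
          simp only [Metric.mem_ball, Real.dist_eq, sub_zero, abs_of_pos ht0]
          exact htε
        have hφt : 0 < g ω (x + t • (v - x)) := hball hmemball
        have h1 := hdsub (x + t • (v - x))
        have hin : (inner ℝ (d ω) ((x + t • (v - x)) - x) : ℝ) = t * (inner ℝ (d ω) (v - x) : ℝ) := by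
          rw [add_sub_cancel_left, real_inner_smul_right]
        have h2 : g ω (x + t • (v - x)) ≤ (1 - t) * g ω x + t * g ω v := by
          have hc := (hg ω).2 (Set.mem_univ x) (Set.mem_univ v)
            (by linarith : (0:ℝ) ≤ 1 - t) ht0.le (by ring)
          have heq : (1 - t) • x + t • v = x + t • (v - x) := by module
          rwa [heq] at hc
        rw [max_eq_right hφt.le, hmax, hin] at h1
        nlinarith [h1, h2, ht0]
      have hdM : ‖d ω‖ ≤ M := hsub ω x hx (d ω) hsubg
      have hdpos : 0 < ‖d ω‖ := by
        rcases eq_or_lt_of_le (norm_nonneg (d ω)) with h | h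
        · exfalso
          have hd0 : d ω = 0 := norm_eq_zero.mp h.symm
          have := hsubg y
          rw [hd0] at this
          simp only [inner_zero_left, add_zero] at this
          linarith [hgy ω]
        · exact h
      set α := β * (max 0 (g ω x) / ‖d ω‖ ^ 2) with hα
      set z := x - α • d ω with hz
      have hin2 : (g ω x : ℝ) ≤ (inner ℝ (d ω) (x - y) : ℝ) := by
        have h1 := hsubg y
        have : (inner ℝ (d ω) (x - y) : ℝ) = - (inner ℝ (d ω) (y - x) : ℝ) := by
          rw [← inner_neg_right, neg_sub]
        rw [this]
        linarith [hgy ω]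
      have hexp : ‖z - y‖ ^ 2 =
          ‖x - y‖ ^ 2 - 2 * α * (inner ℝ (d ω) (x - y) : ℝ) + α ^ 2 * ‖d ω‖ ^ 2 := by
        have hsplit : z - y = (x - y) - α • d ω := by rw [hz]; abel
        rw [hsplit, norm_sub_sq_real, real_inner_smul_right, real_inner_comm, norm_smul]
        simp [mul_pow, sq_abs]
        ring
      have hα0 : 0 ≤ α := by
        apply mul_nonneg hβ0.le
        positivity
      have hd2 : (0:ℝ) < ‖d ω‖ ^ 2 := by positivity
      have hαd : α * ‖d ω‖ ^ 2 = β * g ω x := by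
        rw [hα, hmax]; field_simp
      have hzy : ‖z - y‖ ^ 2 ≤ ‖x - y‖ ^ 2 - β * (2 - β) * (g ω x) ^ 2 / ‖d ω‖ ^ 2 := by
        rw [hexp]
        have h2α : 2 * α * g ω x ≤ 2 * α * (inner ℝ (d ω) (x - y) : ℝ) := by
          apply mul_le_mul_of_nonneg_left hin2 (by linarith)
        have hαval : α = β * g ω x / ‖d ω‖ ^ 2 := by rw [hα, hmax, mul_div_assoc]
        rw [hαval]
        have key2 : -2 * (β * g ω x / ‖d ω‖ ^ 2) * g ω x + (β * g ω x / ‖d ω‖ ^ 2) ^ 2 * ‖d ω‖ ^ 2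
            = - (β * (2 - β) * (g ω x) ^ 2 / ‖d ω‖ ^ 2) := by
          field_simp; ring
        rw [hαval] at h2α
        nlinarith [h2α, key2]
      have hdiv : β * (2 - β) * (g ω x) ^ 2 / M ^ 2 ≤ β * (2 - β) * (g ω x) ^ 2 / ‖d ω‖ ^ 2 := by
        apply div_le_div_of_nonneg_left _ hd2 _
        · exact mul_nonneg (mul_nonneg hβ0.le (by linarith)) (sq_nonneg _)
        · nlinarith
      have hPle : ‖P z - y‖ ^ 2 ≤ ‖z - y‖ ^ 2 := hproj z y hyY
      have hinfle : Metric.infDist (P z) Xs ≤ ‖P z - y‖ := by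
        rw [← dist_eq_norm]
        exact Metric.infDist_le_dist_of_mem hyXs
      have hinfsq : (Metric.infDist (P z) Xs) ^ 2 ≤ ‖P z - y‖ ^ 2 :=
        pow_le_pow_left₀ Metric.infDist_nonneg hinfle 2
      have hxy : (Metric.infDist x Xs) ^ 2 = ‖x - y‖ ^ 2 := by
        rw [hy, dist_eq_norm]
      rw [hxy, hmax]
      calc (Metric.infDist (P z) Xs) ^ 2 ≤ ‖z - y‖ ^ 2 := le_trans hinfsq hPle
        _ ≤ ‖x - y‖ ^ 2 - β * (2 - β) * (g ω x) ^ 2 / ‖d ω‖ ^ 2 := hzy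
        _ ≤ ‖x - y‖ ^ 2 - β * (2 - β) / M ^ 2 * (g ω x) ^ 2 := by
            have : β * (2 - β) / M ^ 2 * (g ω x) ^ 2 = β * (2 - β) * (g ω x) ^ 2 / M ^ 2 := by ring
            rw [this]; linarith [hdiv]
    · -- the step size is zero
      have hmax0 : max 0 (g ω x) = 0 := by
        rcases le_or_gt (g ω x) 0 with h | h
        · exact max_eq_left h
        · exact absurd (lt_max_iff.mpr (Or.inr h)) hpos
      have hPx : P x = x := by
        obtain ⟨_, hmin⟩ := hP x
        have := hmin x hx
        simp only [sub_self, norm_zero] at this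
        have h0 : ‖P x - x‖ = 0 := le_antisymm this (norm_nonneg _)
        have h1 := norm_eq_zero.mp h0
        have := sub_eq_zero.mp h1
        exact this
      simp only [hmax0, zero_div, mul_zero, zero_smul, sub_zero, hPx]
      simp
  calc ∫ ω, (Metric.infDist (P (x - (β * (max 0 (g ω x) / ‖d ω‖ ^ 2)) • d ω)) Xs) ^ 2 ∂π
      ≤ ∫ ω, ((Metric.infDist x Xs) ^ 2 - (β * (2 - β) / M ^ 2) * (max 0 (g ω x)) ^ 2) ∂π :=
        integral_mono hint1 ((integrable_const _).sub (hint2.const_mul _)) key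
    _ = (Metric.infDist x Xs) ^ 2 - (β * (2 - β) / M ^ 2) * ∫ ω, (max 0 (g ω x)) ^ 2 ∂π := by
        rw [integral_sub (integrable_const _) (hint2.const_mul _), integral_const,
          integral_const_mul]
        simp [measure_univ]
end
end

section
/- Under the assumptions of the one-step descent lemma for the stochastic subgradient projection method with constant stepsize β ∈ (0,2), and assuming additionally linear regularity dist²(y, X*) ≤ c (E_{ω∼π}[g_ω⁺(y)])² for all y ∈ Y with c M_g² ≥ 1, the iterates satisfy E[dist²(x_k, X*)] ≤ q^k E[dist²(x_0, X*)] for all k ≥ 1, where q = 1 − β(2−β)/(c M_g²) ∈ [0,1). -/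
open MeasureTheory ProbabilityTheory Finset

noncomputable section

/-- Projection onto a convex set is distance-decreasing towards points of the set. -/
lemma aux_proj {n : ℕ} (Y : Set (EuclideanSpace ℝ (Fin n))) (hYconv : Convex ℝ Y)
    (P : EuclideanSpace ℝ (Fin n) → EuclideanSpace ℝ (Fin n))
    (hP : ∀ v, P v ∈ Y ∧ ∀ w ∈ Y, ‖P v - v‖ ≤ ‖w - v‖)
    (v z : EuclideanSpace ℝ (Fin n)) (hz : z ∈ Y) : ‖P v - z‖ ≤ ‖v - z‖ := by
  haveI : Nonempty Y := ⟨⟨P v, (hP v).1⟩⟩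
  have h1 : ‖v - P v‖ = ⨅ w : Y, ‖v - w‖ := by
    refine le_antisymm (le_ciInf fun w => ?_) (ciInf_le ⟨0, ?_⟩ (⟨P v, (hP v).1⟩ : Y))
    · have := (hP v).2 w.1 w.2
      rwa [norm_sub_rev (P v) v, norm_sub_rev (w : EuclideanSpace ℝ (Fin n)) v] at this
    · rintro r ⟨w, rfl⟩; exact norm_nonneg _
  have hchar := (norm_eq_iInf_iff_real_inner_le_zero hYconv (hP v).1).mp h1 z hz
  have expand := norm_add_sq_real (v - P v) (P v - z)
  have hsum : (v - P v) + (P v - z) = v - z := by abel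
  rw [hsum] at expand
  have hneg : (inner ℝ (v - P v) (P v - z) : ℝ) = -(inner ℝ (v - P v) (z - P v) : ℝ) := by
    rw [← inner_neg_right, neg_sub]
  nlinarith [norm_nonneg (P v - z), norm_nonneg (v - z), sq_nonneg (‖v - P v‖)]

/-- A subgradient of `max 0 (g ·)` at a point where `g > 0` is a subgradient of `g`. -/
lemma aux_sub {n : ℕ} (f : EuclideanSpace ℝ (Fin n) → ℝ) (hf : ConvexOn ℝ Set.univ f)
    (x dd : EuclideanSpace ℝ (Fin n)) (hx : 0 < f x)
    (hsg : ∀ u, f x + (inner ℝ dd (u - x) : ℝ) ≤ max 0 (f u)) :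
    ∀ v, f x + (inner ℝ dd (v - x) : ℝ) ≤ f v := by
  intro v
  set a : ℝ := inner ℝ dd (v - x) with ha
  by_cases hv : 0 ≤ f v
  · have := hsg v; rwa [max_eq_right hv] at this
  · push_neg at hv
    set s : ℝ := f x / (f x - f v) with hs
    have hfxv : 0 < f x - f v := by linarith
    have hs0 : 0 < s := div_pos hx hfxv
    have hs1 : s < 1 := by rw [div_lt_one hfxv]; linarith
    have hcomb : x + s • (v - x) = (1 - s) • x + s • v := by
      rw [smul_sub, sub_smul, one_smul]; abel
    have hconv := hf.2 (Set.mem_univ x) (Set.mem_univ v) (by linarith : (0:ℝ) ≤ 1 - s)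
      hs0.le (by ring)
    rw [← hcomb] at hconv
    simp only [smul_eq_mul] at hconv
    have hsfx : s * (f x - f v) = f x := by rw [hs]; exact div_mul_cancel₀ _ hfxv.ne'
    have hval : (1 - s) * f x + s * f v = 0 := by
      linear_combination -hsfx
    have h2 := hsg (x + s • (v - x))
    have hin : (inner ℝ dd ((x + s • (v - x)) - x) : ℝ) = s * a := by
      have : (x + s • (v - x)) - x = s • (v - x) := by abel
      rw [this, real_inner_smul_right]
    rw [hin] at h2
    have hmax : max 0 (f (x + s • (v - x))) = 0 :=
      max_eq_left (by linarith)
    rw [hmax] at h2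
    -- f x + s * a ≤ 0, s = f x / (f x - f v)
    have hsa : s * a ≤ -(f x) := by linarith
    have : f x * a ≤ -(f x) * (f x - f v) := by
      have := mul_le_mul_of_nonneg_right hsa hfxv.le
      calc f x * a = s * a * (f x - f v) := by linear_combination (-a) * hsfx
        _ ≤ -(f x) * (f x - f v) := this
    nlinarith

/-- Jensen: `(∫ f)² ≤ ∫ f²` for a probability measure. -/
lemma aux_jensen {Ω : Type*} [MeasurableSpace Ω] (π : Measure Ω) [IsProbabilityMeasure π]
    (f : Ω → ℝ) (hfm : AEStronglyMeasurable f π)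
    (hf2 : Integrable (fun ω => f ω ^ 2) π) :
    (∫ ω, f ω ∂π) ^ 2 ≤ ∫ ω, f ω ^ 2 ∂π := by
  have hm : MemLp f 2 π := (memLp_two_iff_integrable_sq hfm).2 hf2
  have hv := variance_nonneg f π
  rw [variance_eq_sub hm] at hv
  simp only [Pi.pow_apply] at hv
  linarith

/-- One-step descent estimate, algebraic core. -/
lemma aux_step {n : ℕ} (u z dd : EuclideanSpace ℝ (Fin n)) (G β M : ℝ)
    (hβ0 : 0 < β) (hβ2 : β < 2) (hM : 0 < M) (hGpos : 0 < G)
    (hdM : ‖dd‖ ≤ M) (hdpos : 0 < ‖dd‖)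
    (hA : G ≤ (inner ℝ dd (u - z) : ℝ)) :
    ‖(u - (β * (G / ‖dd‖ ^ 2)) • dd) - z‖ ^ 2
      ≤ ‖u - z‖ ^ 2 - (β * (2 - β) / M ^ 2) * G ^ 2 := by
  have hM2 : (0:ℝ) < M ^ 2 := by positivity
  have hr : (0:ℝ) < ‖dd‖ ^ 2 := by positivity
  set t : ℝ := β * (G / ‖dd‖ ^ 2) with ht
  set A : ℝ := (inner ℝ dd (u - z) : ℝ) with hAdef
  have htpos : 0 < t := by rw [ht]; positivity
  have hsm : ‖t • dd‖ ^ 2 = t ^ 2 * ‖dd‖ ^ 2 := by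
    rw [norm_smul, Real.norm_eq_abs, mul_pow, sq_abs]
  have hin2 : (inner ℝ (u - z) (t • dd) : ℝ) = t * A := by
    rw [real_inner_smul_right, real_inner_comm]
  have hshift : (u - t • dd) - z = (u - z) - t • dd := by abel
  have expand : ‖(u - z) - t • dd‖ ^ 2
      = ‖u - z‖ ^ 2 - 2 * (t * A) + t ^ 2 * ‖dd‖ ^ 2 := by
    rw [norm_sub_sq_real, hsm, hin2]
  rw [hshift, expand]
  have he1 : t * ‖dd‖ ^ 2 = β * G := by rw [ht]; field_simp
  have he2 : t ^ 2 * ‖dd‖ ^ 2 = t * (β * G) := by rw [← he1]; ring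
  have e3 : 2 * (t * A) - t ^ 2 * ‖dd‖ ^ 2 = t * (2 * A - β * G) := by
    rw [he2]; ring
  have step1 : t * G * (2 - β) ≤ 2 * (t * A) - t ^ 2 * ‖dd‖ ^ 2 := by
    rw [e3]
    have h4 : G * (2 - β) ≤ 2 * A - β * G := by nlinarith
    calc t * G * (2 - β) = t * (G * (2 - β)) := by ring
      _ ≤ t * (2 * A - β * G) := mul_le_mul_of_nonneg_left h4 htpos.le
  have step2 : t * G * (2 - β) = β * (2 - β) * G ^ 2 / ‖dd‖ ^ 2 := by
    rw [ht]; field_simp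
  have step3 : β * (2 - β) * G ^ 2 / M ^ 2 ≤ β * (2 - β) * G ^ 2 / ‖dd‖ ^ 2 := by
    exact div_le_div_of_nonneg_left
      (mul_nonneg (mul_pos hβ0 (by linarith : (0:ℝ) < 2 - β)).le (sq_nonneg G)) hr
      (pow_le_pow_left₀ (norm_nonneg dd) hdM 2)
  have : β * (2 - β) / M ^ 2 * G ^ 2 = β * (2 - β) * G ^ 2 / M ^ 2 := by ring
  linarith

/-- Linear convergence of the stochastic subgradient projection method `SSP`
under linear regularity (Theorem 2, expectation part). -/
theorem stmt_8 {n : ℕ} {Ω : Type*} [MeasurableSpace Ω]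
    {Θ : Type*} [MeasurableSpace Θ] (μ : Measure Θ) [IsProbabilityMeasure μ]
    (π : Measure Ω) [IsProbabilityMeasure π]
    (g : Ω → EuclideanSpace ℝ (Fin n) → ℝ)
    (hg : ∀ ω, ConvexOn ℝ Set.univ (g ω))
    (hgmeas : Measurable fun q : Ω × EuclideanSpace ℝ (Fin n) => g q.1 q.2)
    (Y : Set (EuclideanSpace ℝ (Fin n))) (hYclosed : IsClosed Y) (hYconv : Convex ℝ Y)
    (M c : ℝ) (hM : 0 < M) (hc : 0 < c) (hcM : 1 ≤ c * M ^ 2)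
    (hsub : ∀ ω, ∀ y ∈ Y, ∀ s : EuclideanSpace ℝ (Fin n),
      (∀ v, g ω y + (inner ℝ s (v - y) : ℝ) ≤ g ω v) → ‖s‖ ≤ M)
    (Xs : Set (EuclideanSpace ℝ (Fin n)))
    (hXs : Xs = Y ∩ ⋂ ω, {x | g ω x ≤ 0}) (hne : Xs.Nonempty)
    (hintg : ∀ y, Integrable (fun ω => max 0 (g ω y)) π)
    (hreg : ∀ y ∈ Y, (Metric.infDist y Xs) ^ 2 ≤ c * (∫ ω, max 0 (g ω y) ∂π) ^ 2)
    (P : EuclideanSpace ℝ (Fin n) → EuclideanSpace ℝ (Fin n))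
    (hP : ∀ v, P v ∈ Y ∧ ∀ w ∈ Y, ‖P v - v‖ ≤ ‖w - v‖)
    (β : ℝ) (hβ : β ∈ Set.Ioo (0 : ℝ) 2)
    (x : ℕ → Θ → EuclideanSpace ℝ (Fin n)) (w : ℕ → Θ → Ω)
    (d : ℕ → Θ → EuclideanSpace ℝ (Fin n))
    (hxmeas : ∀ k, Measurable (x k)) (hwmeas : ∀ k, Measurable (w k))
    (hx0 : ∀ θ, x 0 θ ∈ Y)
    (hx0int : Integrable (fun θ => ‖x 0 θ‖ ^ 2) μ)
    (hlaw : ∀ k, Measure.map (w k) μ = π)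
    (hindep : ∀ k, IndepFun (x k) (w k) μ)
    (hd : ∀ k θ, if 0 < max 0 (g (w k θ) (x k θ)) then
        (∀ v, max 0 (g (w k θ) (x k θ)) +
          (inner ℝ (d k θ) (v - x k θ) : ℝ) ≤ max 0 (g (w k θ) v))
      else d k θ ≠ 0)
    (hrec : ∀ k θ, x (k + 1) θ =
      P (x k θ - (β * (max 0 (g (w k θ) (x k θ)) / ‖d k θ‖ ^ 2)) • d k θ))
    (hint : ∀ k, Integrable (fun θ => (Metric.infDist (x k θ) Xs) ^ 2) μ)
    (hint2 : ∀ k, Integrable (fun θ => (max 0 (g (w k θ) (x k θ))) ^ 2) μ) :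
    (1 - β * (2 - β) / (c * M ^ 2)) ∈ Set.Ico (0 : ℝ) 1 ∧
    ∀ k : ℕ, 1 ≤ k →
      ∫ θ, (Metric.infDist (x k θ) Xs) ^ 2 ∂μ ≤
        (1 - β * (2 - β) / (c * M ^ 2)) ^ k *
          ∫ θ, (Metric.infDist (x 0 θ) Xs) ^ 2 ∂μ := by
  obtain ⟨hβ0, hβ2⟩ := hβ
  have hM2 : (0:ℝ) < M ^ 2 := by positivity
  have hcM2 : (0:ℝ) < c * M ^ 2 := by positivity
  have hββ : 0 < β * (2 - β) := by nlinarith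
  have hββ1 : β * (2 - β) ≤ 1 := by nlinarith [sq_nonneg (β - 1)]
  set q : ℝ := 1 - β * (2 - β) / (c * M ^ 2) with hqdef
  have hq1 : q < 1 := by
    have : 0 < β * (2 - β) / (c * M ^ 2) := div_pos hββ hcM2
    simp only [hqdef]; linarith
  have hq0 : 0 ≤ q := by
    have : β * (2 - β) / (c * M ^ 2) ≤ 1 := by
      rw [div_le_one hcM2]; linarith
    simp only [hqdef]; linarith
  -- membership of iterates in Y
  have hxY : ∀ k θ, x k θ ∈ Y := by
    intro k
    induction k with
    | zero => exact hx0
    | succ k ih => intro θ; rw [hrec]; exact (hP _).1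
  -- properties of Xs
  have hXsY : Xs ⊆ Y := hXs ▸ Set.inter_subset_left
  have hXsg : ∀ z ∈ Xs, ∀ ω, g ω z ≤ 0 := by
    intro z hz ω
    rw [hXs] at hz
    exact Set.mem_iInter.mp hz.2 ω
  have hgc : ∀ ω, Continuous (g ω) :=
    fun ω => continuousOn_univ.mp ((hg ω).continuousOn isOpen_univ)
  have hXsclosed : IsClosed Xs := by
    rw [hXs]
    exact hYclosed.inter (isClosed_iInter fun ω => isClosed_le (hgc ω) continuous_const)
  -- one-step pointwise inequality
  have key : ∀ k θ, (Metric.infDist (x (k+1) θ) Xs) ^ 2 ≤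
      (Metric.infDist (x k θ) Xs) ^ 2
        - (β * (2 - β) / M ^ 2) * (max 0 (g (w k θ) (x k θ))) ^ 2 := by
    intro k θ
    obtain ⟨z, hzXs, hzdist⟩ := hXsclosed.exists_infDist_eq_dist hne (x k θ)
    set ω := w k θ with hω
    set u := x k θ with hu
    set G : ℝ := max 0 (g ω u) with hG
    set dd := d k θ with hdd
    set t : ℝ := β * (G / ‖dd‖ ^ 2) with ht
    have hGnn : 0 ≤ G := le_max_left _ _
    have hstep : ‖x (k+1) θ - z‖ ^ 2 ≤ ‖u - z‖ ^ 2 - (β * (2 - β) / M ^ 2) * G ^ 2 := by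
      have hrecθ : x (k+1) θ = P (u - t • dd) := hrec k θ
      have hPz : ‖P (u - t • dd) - z‖ ≤ ‖(u - t • dd) - z‖ :=
        aux_proj Y hYconv P hP _ z (hXsY hzXs)
      rw [hrecθ]
      by_cases hGpos : 0 < G
      · have hsg := hd k θ
        rw [if_pos hGpos] at hsg
        have hmaxz : max 0 (g ω z) = 0 := max_eq_left (hXsg z hzXs ω)
        have hddne : dd ≠ 0 := by
          intro h0
          have h1 := hsg z
          rw [← hdd, h0] at h1
          simp only [inner_zero_left, add_zero] at h1
          rw [← hω, hmaxz] at h1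
          exact absurd h1 (not_le.mpr hGpos)
        have hgu : 0 < g ω u := by
          rcases lt_max_iff.mp hGpos with h | h
          · exact absurd h (lt_irrefl 0)
          · exact h
        have hGeq : G = g ω u := max_eq_right hgu.le
        have hGd : ∀ v, g ω u + (inner ℝ dd (v - u) : ℝ) ≤ g ω v := by
          refine aux_sub (g ω) (hg ω) u dd hgu ?_
          intro u'
          have h := hsg u'
          rwa [show (max 0 (g (w k θ) (x k θ)) : ℝ) = g ω u from max_eq_right hgu.le] at h
        have hdM : ‖dd‖ ≤ M := hsub ω u (hxY k θ) dd hGd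
        have hdpos : 0 < ‖dd‖ := norm_pos_iff.mpr hddne
        have hr : 0 < ‖dd‖ ^ 2 := by positivity
        have hdz : (inner ℝ dd (z - u) : ℝ) ≤ -G := by
          have h1 := hsg z
          rw [← hω, ← hu, ← hdd, hmaxz] at h1
          linarith
        have hA : G ≤ (inner ℝ dd (u - z) : ℝ) := by
          have : (inner ℝ dd (u - z) : ℝ) = -(inner ℝ dd (z - u) : ℝ) := by
            rw [← inner_neg_right, neg_sub]
          linarith [hdz, this]
        have hPz2 : ‖P (u - t • dd) - z‖ ^ 2 ≤ ‖(u - t • dd) - z‖ ^ 2 :=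
          pow_le_pow_left₀ (norm_nonneg _) hPz 2
        have hmain := aux_step u z dd G β M hβ0 hβ2 hM hGpos hdM hdpos hA
        calc ‖P (u - t • dd) - z‖ ^ 2 ≤ ‖(u - t • dd) - z‖ ^ 2 := hPz2
          _ ≤ ‖u - z‖ ^ 2 - (β * (2 - β) / M ^ 2) * G ^ 2 := hmain
      · have hG0 : G = 0 := le_antisymm (not_lt.mp hGpos) hGnn
        have ht0 : t = 0 := by rw [ht, hG0]; simp
        rw [ht0] at hPz
        simp only [zero_smul, sub_zero] at hPz
        rw [hG0, ht0]
        simp only [zero_smul, sub_zero]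
        have h2 := pow_le_pow_left₀ (norm_nonneg (P u - z)) hPz 2
        nlinarith
    -- pass to infDist
    have h1 : Metric.infDist (x (k+1) θ) Xs ≤ ‖x (k+1) θ - z‖ := by
      rw [← dist_eq_norm]
      exact Metric.infDist_le_dist_of_mem hzXs
    have h2 : Metric.infDist u Xs = ‖u - z‖ := by rw [hzdist, dist_eq_norm]
    have h3 : 0 ≤ Metric.infDist (x (k+1) θ) Xs := Metric.infDist_nonneg
    rw [h2]
    nlinarith [hstep]
  -- expectation notation
  set D : ℕ → ℝ := fun k => ∫ θ, (Metric.infDist (x k θ) Xs) ^ 2 ∂μ with hD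
  have hDnn : ∀ k, 0 ≤ D k := fun k => integral_nonneg fun θ => by positivity
  -- regularity in expectation: D k ≤ c * ∫ G²
  have reg : ∀ k, D k ≤ c * ∫ θ, (max 0 (g (w k θ) (x k θ))) ^ 2 ∂μ := by
    intro k
    set ν : Measure (EuclideanSpace ℝ (Fin n)) := μ.map (x k) with hν
    haveI : IsProbabilityMeasure ν := Measure.isProbabilityMeasure_map (hxmeas k).aemeasurable
    have pairmeas : Measurable (fun θ => (x k θ, w k θ)) := (hxmeas k).prodMk (hwmeas k)
    set F : EuclideanSpace ℝ (Fin n) × Ω → ℝ := fun p => (max 0 (g p.2 p.1)) ^ 2 with hF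
    have hFmeas : Measurable F := by
      apply Measurable.pow_const
      exact measurable_const.max (hgmeas.comp measurable_swap)
    have hmap : μ.map (fun θ => (x k θ, w k θ)) = ν.prod π := by
      have h := (indepFun_iff_map_prod_eq_prod_map_map (hxmeas k).aemeasurable
        (hwmeas k).aemeasurable).mp (hindep k)
      rw [hlaw k] at h
      exact h
    have hInth : Integrable F (ν.prod π) := by
      rw [← hmap, integrable_map_measure hFmeas.aestronglyMeasurable pairmeas.aemeasurable]
      exact hint2 k
    have hA : ∫ θ, (max 0 (g (w k θ) (x k θ))) ^ 2 ∂μ = ∫ a, ∫ ω', F (a, ω') ∂π ∂ν := by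
      calc ∫ θ, (max 0 (g (w k θ) (x k θ))) ^ 2 ∂μ
          = ∫ p, F p ∂(μ.map (fun θ => (x k θ, w k θ))) :=
            (integral_map pairmeas.aemeasurable hFmeas.aestronglyMeasurable).symm
        _ = ∫ p, F p ∂(ν.prod π) := by rw [hmap]
        _ = ∫ a, ∫ ω', F (a, ω') ∂π ∂ν := integral_prod _ hInth
    have hB : ∀ᵐ a ∂ν, Integrable (fun ω' => F (a, ω')) π := hInth.prod_right_ae
    have hYae : ∀ᵐ a ∂ν, a ∈ Y := by
      rw [hν]
      exact (ae_map_iff (hxmeas k).aemeasurable hYclosed.measurableSet).mpr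
        (Filter.Eventually.of_forall (hxY k))
    have hptwise : ∀ᵐ a ∂ν, (Metric.infDist a Xs) ^ 2 ≤ c * ∫ ω', F (a, ω') ∂π := by
      filter_upwards [hB, hYae] with a hInt2a haY
      have h1 := hreg a haY
      have h2 : (∫ ω', max 0 (g ω' a) ∂π) ^ 2 ≤ ∫ ω', (max 0 (g ω' a)) ^ 2 ∂π := by
        apply aux_jensen π _ ?_ hInt2a
        exact (measurable_const.max (hgmeas.comp (measurable_id.prodMk
          measurable_const))).aestronglyMeasurable
      calc (Metric.infDist a Xs) ^ 2 ≤ c * (∫ ω', max 0 (g ω' a) ∂π) ^ 2 := h1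
        _ ≤ c * ∫ ω', (max 0 (g ω' a)) ^ 2 ∂π := by
            exact mul_le_mul_of_nonneg_left h2 hc.le
    have hdistmeas : Measurable (fun a : EuclideanSpace ℝ (Fin n) =>
        (Metric.infDist a Xs) ^ 2) :=
      ((Metric.continuous_infDist_pt Xs).pow 2).measurable
    have hlhsInt : Integrable (fun a => (Metric.infDist a Xs) ^ 2) ν := by
      rw [hν, integrable_map_measure hdistmeas.aestronglyMeasurable (hxmeas k).aemeasurable]
      exact hint k
    have hrhsInt : Integrable (fun a => ∫ ω', F (a, ω') ∂π) ν := hInth.integral_prod_left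
    have hDk : D k = ∫ a, (Metric.infDist a Xs) ^ 2 ∂ν := by
      rw [hν, integral_map (hxmeas k).aemeasurable hdistmeas.aestronglyMeasurable]
    calc D k = ∫ a, (Metric.infDist a Xs) ^ 2 ∂ν := hDk
      _ ≤ ∫ a, c * ∫ ω', F (a, ω') ∂π ∂ν :=
          integral_mono_ae hlhsInt (hrhsInt.const_mul c) hptwise
      _ = c * ∫ a, ∫ ω', F (a, ω') ∂π ∂ν := integral_const_mul c _
      _ = c * ∫ θ, (max 0 (g (w k θ) (x k θ))) ^ 2 ∂μ := by rw [hA]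
  -- contraction step
  have step : ∀ k, D (k + 1) ≤ q * D k := by
    intro k
    set C : ℝ := β * (2 - β) / M ^ 2 with hCdef
    have hCpos : 0 < C := div_pos hββ hM2
    set I : ℝ := ∫ θ, (max 0 (g (w k θ) (x k θ))) ^ 2 ∂μ with hI
    have int1 : D (k + 1) + C * I ≤ D k := by
      have hmono : ∀ θ, (Metric.infDist (x (k+1) θ) Xs) ^ 2
          + C * (max 0 (g (w k θ) (x k θ))) ^ 2 ≤ (Metric.infDist (x k θ) Xs) ^ 2 := by
        intro θ
        have := key k θ
        linarith
      have h5 := integral_mono ((hint (k+1)).add ((hint2 k).const_mul C)) (hint k) hmono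
      simp only [Pi.add_apply] at h5
      rw [integral_add (hint (k+1)) ((hint2 k).const_mul C), integral_const_mul] at h5
      simp only [hD, hI]
      exact h5
    have int2 : D k ≤ c * I := reg k
    have hfrac : β * (2 - β) / (c * M ^ 2) * c = C := by
      rw [hCdef]; field_simp
    have : β * (2 - β) / (c * M ^ 2) * D k ≤ C * I := by
      calc β * (2 - β) / (c * M ^ 2) * D k
          ≤ β * (2 - β) / (c * M ^ 2) * (c * I) := by
            exact mul_le_mul_of_nonneg_left int2 (by positivity)
        _ = C * I := by rw [← hfrac]; ring
    calc D (k + 1) ≤ D k - C * I := by linarith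
      _ ≤ D k - β * (2 - β) / (c * M ^ 2) * D k := by linarith
      _ = q * D k := by rw [hqdef]; ring
  refine ⟨⟨hq0, hq1⟩, ?_⟩
  have main : ∀ k, D k ≤ q ^ k * D 0 := by
    intro k
    induction k with
    | zero => simp
    | succ k ih =>
      calc D (k + 1) ≤ q * D k := step k
        _ ≤ q * (q ^ k * D 0) := mul_le_mul_of_nonneg_left ih hq0
        _ = q ^ (k + 1) * D 0 := by ring
  exact fun k _ => main k
end
end

section
/- Let x_0, x_1, … be random vectors in a closed convex set Y satisfying E[dist²(x_{k+1}, X*)] ≤ E[dist²(x_k, X*)] − (β(2−β)/M_g²) E[(G(x_k))²] for all k ≥ 0, where G : Y → [0,∞) is convex, β ∈ (0,2), M_g > 0, and E[dist²(x_0,X*)] < ∞. Then the averaged iterates x̂_k = (1/k)Σ_{j=0}^{k−1} x_j satisfy (E[G(x̂_k)])² ≤ M_g² E[dist²(x_0, X*)]/(β(2−β) k) for all k ≥ 1. -/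
open MeasureTheory Finset

/-!
Summing the descent inequality over `j < k` telescopes to
`β (2 - β) / M² · ∑_{j<k} E[G(x_j)²] ≤ E[dist²(x_0, X*)]`.
On the other side, Jensen's inequality for the convex `G` gives `G(x̂_k) ≤ (1/k) ∑_{j<k} G(x_j)`
pointwise, and since `E[G(x̂_k)] ≥ 0` we may square the integrated inequality; convexity of `t ↦ t²`
twice (for the average over `j` and for the expectation) then bounds `E[G(x̂_k)]²` by
`(1/k) ∑_{j<k} E[G(x_j)²]`.
-/

lemma sq_integral_le_integral_sq {Θ : Type*} [MeasurableSpace Θ] {μ : Measure Θ}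
    [IsProbabilityMeasure μ] {f : Θ → ℝ} (hf : Integrable f μ)
    (hf2 : Integrable (fun θ => f θ ^ 2) μ) :
    (∫ θ, f θ ∂μ) ^ 2 ≤ ∫ θ, f θ ^ 2 ∂μ :=
  even_two.convexOn_pow.map_integral_le (continuous_pow 2).continuousOn isClosed_univ
    (ae_of_all _ fun _ => Set.mem_univ _) hf hf2

lemma mul_sum_range_le_sub_of_le_sub_mul {d a : ℕ → ℝ} {c : ℝ}
    (hdesc : ∀ j, d (j + 1) ≤ d j - c * a j) (k : ℕ) :
    c * ∑ j ∈ range k, a j ≤ d 0 - d k := by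
  induction k with
  | zero => simp
  | succ k ih => rw [sum_range_succ, mul_add]; linarith [hdesc k]

section Average

variable {E : Type*} [AddCommGroup E] [Module ℝ E] {Y : Set E} {k : ℕ} {z : ℕ → E}

lemma Convex.one_div_smul_sum_range_mem (hY : Convex ℝ Y) (hk : k ≠ 0)
    (hz : ∀ j ∈ range k, z j ∈ Y) : (1 / (k : ℝ)) • ∑ j ∈ range k, z j ∈ Y := by
  rw [smul_sum]
  exact hY.sum_mem (fun _ _ => by positivity) (by simp [hk]) hz

lemma ConvexOn.map_one_div_smul_sum_range_le {G : E → ℝ} (hG : ConvexOn ℝ Y G) (hk : k ≠ 0)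
    (hz : ∀ j ∈ range k, z j ∈ Y) :
    G ((1 / (k : ℝ)) • ∑ j ∈ range k, z j) ≤ (∑ j ∈ range k, G (z j)) / k := by
  rw [smul_sum, sum_div]
  simpa [div_eq_inv_mul] using
    hG.map_sum_le (fun _ _ => by positivity) (by simp [hk]) hz

lemma integral_comp_one_div_smul_sum_range_le {Θ : Type*} [MeasurableSpace Θ] (μ : Measure Θ)
    {G : E → ℝ} (hG : ConvexOn ℝ Y G) (hGnn : ∀ y ∈ Y, 0 ≤ G y) {x : ℕ → Θ → E}
    (hxY : ∀ j θ, x j θ ∈ Y) (hint : ∀ j, Integrable (fun θ => G (x j θ)) μ) (hk : k ≠ 0) :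
    ∫ θ, G ((1 / (k : ℝ)) • ∑ j ∈ range k, x j θ) ∂μ ≤
      (∑ j ∈ range k, ∫ θ, G (x j θ) ∂μ) / k := by
  rw [← integral_finsetSum _ fun j _ => hint j, ← integral_div]
  exact integral_mono_of_nonneg
    (ae_of_all _ fun θ => hGnn _ (hG.1.one_div_smul_sum_range_mem hk fun j _ => hxY j θ))
    ((integrable_finsetSum _ fun j _ => hint j).div_const _)
    (ae_of_all _ fun θ => hG.map_one_div_smul_sum_range_le hk fun j _ => hxY j θ)

end Average

theorem stmt_9_general {n : ℕ} {Θ : Type*} [MeasurableSpace Θ]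
    (μ : Measure Θ) [IsProbabilityMeasure μ]
    (Y : Set (EuclideanSpace ℝ (Fin n)))
    (Xs : Set (EuclideanSpace ℝ (Fin n)))
    (G : EuclideanSpace ℝ (Fin n) → ℝ) (hG : ConvexOn ℝ Y G)
    (hGnn : ∀ y ∈ Y, 0 ≤ G y)
    (β M : ℝ) (hβ : β ∈ Set.Ioo (0 : ℝ) 2) (hM : 0 < M)
    (x : ℕ → Θ → EuclideanSpace ℝ (Fin n)) (hxY : ∀ k θ, x k θ ∈ Y)
    (hintG : ∀ k, Integrable (fun θ => G (x k θ)) μ)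
    (hintG2 : ∀ k, Integrable (fun θ => (G (x k θ)) ^ 2) μ)
    (hdesc : ∀ k, ∫ θ, (Metric.infDist (x (k + 1) θ) Xs) ^ 2 ∂μ ≤
      (∫ θ, (Metric.infDist (x k θ) Xs) ^ 2 ∂μ) -
        (β * (2 - β) / M ^ 2) * ∫ θ, (G (x k θ)) ^ 2 ∂μ) :
    ∀ k : ℕ, 1 ≤ k →
      (∫ θ, G ((1 / (k : ℝ)) • ∑ j ∈ Finset.range k, x j θ) ∂μ) ^ 2 ≤
        M ^ 2 * (∫ θ, (Metric.infDist (x 0 θ) Xs) ^ 2 ∂μ) / (β * (2 - β) * k) := by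
  intro k hk
  obtain ⟨hβ0, hβ2⟩ := hβ
  have hk0 : k ≠ 0 := by omega
  have hβ' : 0 < 2 - β := by linarith
  have htel := mul_sum_range_le_sub_of_le_sub_mul
    (d := fun j => ∫ θ, (Metric.infDist (x j θ) Xs) ^ 2 ∂μ)
    (a := fun j => ∫ θ, (G (x j θ)) ^ 2 ∂μ) hdesc k
  have hdk : 0 ≤ ∫ θ, (Metric.infDist (x k θ) Xs) ^ 2 ∂μ :=
    integral_nonneg fun _ => sq_nonneg _
  calc (∫ θ, G ((1 / (k : ℝ)) • ∑ j ∈ range k, x j θ) ∂μ) ^ 2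
      ≤ ((∑ j ∈ range k, ∫ θ, G (x j θ) ∂μ) / k) ^ 2 :=
        pow_le_pow_left₀
          (integral_nonneg fun θ => hGnn _ (hG.1.one_div_smul_sum_range_mem hk0 fun j _ => hxY j θ))
          (integral_comp_one_div_smul_sum_range_le μ hG hGnn hxY hintG hk0) 2
    _ ≤ (∑ j ∈ range k, (∫ θ, G (x j θ) ∂μ) ^ 2) / k := by
        simpa using sum_div_card_sq_le_sum_sq_div_card (s := range k)
          (f := fun j => ∫ θ, G (x j θ) ∂μ)
    _ ≤ (∑ j ∈ range k, ∫ θ, G (x j θ) ^ 2 ∂μ) / k := by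
        gcongr with j
        exact sq_integral_le_integral_sq (hintG j) (hintG2 j)
    _ = (β * (2 - β) / M ^ 2 * ∑ j ∈ range k, ∫ θ, G (x j θ) ^ 2 ∂μ) * M ^ 2 /
          (β * (2 - β) * k) := by
        field_simp
    _ ≤ M ^ 2 * (∫ θ, (Metric.infDist (x 0 θ) Xs) ^ 2 ∂μ) / (β * (2 - β) * k) := by
        rw [mul_comm (M ^ 2)]
        gcongr
        linarith

/-- Sublinear rate for the infeasibility measure `G` at the averaged iterates
(Theorem 1 in abstract form). -/
theorem stmt_9 {n : ℕ} {Θ : Type*} [MeasurableSpace Θ]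
    (μ : Measure Θ) [IsProbabilityMeasure μ]
    (Y : Set (EuclideanSpace ℝ (Fin n))) (hYclosed : IsClosed Y) (hYconv : Convex ℝ Y)
    (Xs : Set (EuclideanSpace ℝ (Fin n))) (hXsY : Xs ⊆ Y) (hXsne : Xs.Nonempty)
    (hXsclosed : IsClosed Xs) (hXsconv : Convex ℝ Xs)
    (G : EuclideanSpace ℝ (Fin n) → ℝ) (hG : ConvexOn ℝ Y G)
    (hGnn : ∀ y ∈ Y, 0 ≤ G y)
    (β M : ℝ) (hβ : β ∈ Set.Ioo (0 : ℝ) 2) (hM : 0 < M)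
    (x : ℕ → Θ → EuclideanSpace ℝ (Fin n)) (hxY : ∀ k θ, x k θ ∈ Y)
    (hint0 : Integrable (fun θ => (Metric.infDist (x 0 θ) Xs) ^ 2) μ)
    (hintd : ∀ k, Integrable (fun θ => (Metric.infDist (x k θ) Xs) ^ 2) μ)
    (hintG : ∀ k, Integrable (fun θ => G (x k θ)) μ)
    (hintG2 : ∀ k, Integrable (fun θ => (G (x k θ)) ^ 2) μ)
    (hintGavg : ∀ k : ℕ, 1 ≤ k →
      Integrable (fun θ => G ((1 / (k : ℝ)) • ∑ j ∈ Finset.range k, x j θ)) μ)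
    (hdesc : ∀ k, ∫ θ, (Metric.infDist (x (k + 1) θ) Xs) ^ 2 ∂μ ≤
      (∫ θ, (Metric.infDist (x k θ) Xs) ^ 2 ∂μ) -
        (β * (2 - β) / M ^ 2) * ∫ θ, (G (x k θ)) ^ 2 ∂μ) :
    ∀ k : ℕ, 1 ≤ k →
      (∫ θ, G ((1 / (k : ℝ)) • ∑ j ∈ Finset.range k, x j θ) ∂μ) ^ 2 ≤
        M ^ 2 * (∫ θ, (Metric.infDist (x 0 θ) Xs) ^ 2 ∂μ) / (β * (2 - β) * k) :=
  stmt_9_general μ Y Xs G hG hGnn β M hβ hM x hxY hintG hintG2 hdesc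
end

section
/- Let g_1,…,g_N be convex functions bounded-subgradient on a closed convex Y with constant M_g, vanishing (≤ 0) on a nonempty closed convex set X* ⊆ Y. Fix x ∈ Y, β > 0, and for each i set z^i = x − β (g_i⁺(x)/‖d^i‖²) d^i, where d^i ∈ ∂g_i⁺(x) if g_i⁺(x) > 0 and d^i ≠ 0 otherwise, and let x⁺ = Π_Y[(1/N)Σ_i z^i]. Then for every y ∈ X*: ‖x⁺ − y‖² ≤ ‖x − y‖² − 2(β/N) Σ_i (g_i⁺(x))²/‖d^i‖² + β² ‖(1/N)Σ_i (g_i⁺(x)/‖d^i‖²) d^i‖². -/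
open Finset
set_option maxHeartbeats 1000000

noncomputable section

/-- Minibatch averaged-step inequality (key inequality in Lemma 5). -/
theorem stmt_10 {n N : ℕ} (hN : 0 < N)
    (g : Fin N → EuclideanSpace ℝ (Fin n) → ℝ)
    (hg : ∀ i, ConvexOn ℝ Set.univ (g i))
    (Y : Set (EuclideanSpace ℝ (Fin n))) (hYclosed : IsClosed Y) (hYconv : Convex ℝ Y)
    (M : ℝ) (hM : 0 < M)
    (hsub : ∀ i, ∀ y ∈ Y, ∀ s : EuclideanSpace ℝ (Fin n),
      (∀ v, g i y + (inner ℝ s (v - y) : ℝ) ≤ g i v) → ‖s‖ ≤ M)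
    (Xs : Set (EuclideanSpace ℝ (Fin n))) (hXsY : Xs ⊆ Y) (hXsne : Xs.Nonempty)
    (hXsclosed : IsClosed Xs) (hXsconv : Convex ℝ Xs)
    (hXneg : ∀ i, ∀ z ∈ Xs, g i z ≤ 0)
    (P : EuclideanSpace ℝ (Fin n) → EuclideanSpace ℝ (Fin n))
    (hP : ∀ v, P v ∈ Y ∧ ∀ w ∈ Y, ‖P v - v‖ ≤ ‖w - v‖)
    (x : EuclideanSpace ℝ (Fin n)) (hx : x ∈ Y) (β : ℝ) (hβ : 0 < β)
    (d : Fin N → EuclideanSpace ℝ (Fin n))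
    (hd : ∀ i, if 0 < max 0 (g i x) then
        (∀ v, max 0 (g i x) + (inner ℝ (d i) (v - x) : ℝ) ≤ max 0 (g i v))
      else d i ≠ 0) :
    ∀ y ∈ Xs,
      ‖P ((1 / (N : ℝ)) • ∑ i, (x - (β * (max 0 (g i x) / ‖d i‖ ^ 2)) • d i)) - y‖ ^ 2 ≤
        ‖x - y‖ ^ 2 - 2 * (β / (N : ℝ)) * ∑ i, (max 0 (g i x)) ^ 2 / ‖d i‖ ^ 2 +
          β ^ 2 * ‖(1 / (N : ℝ)) • ∑ i, (max 0 (g i x) / ‖d i‖ ^ 2) • d i‖ ^ 2 := by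
  intro y hy
  have hyY : y ∈ Y := hXsY hy
  have hNpos : (0:ℝ) < N := by exact_mod_cast hN
  set v : EuclideanSpace ℝ (Fin n) :=
    (1 / (N : ℝ)) • ∑ i, (max 0 (g i x) / ‖d i‖ ^ 2) • d i with hv
  -- rewrite averaged point
  have hz : (1 / (N : ℝ)) • ∑ i, (x - (β * (max 0 (g i x) / ‖d i‖ ^ 2)) • d i)
      = x - β • v := by
    have h1 : ∑ i : Fin N, (x - (β * (max 0 (g i x) / ‖d i‖ ^ 2)) • d i)
        = (N : ℝ) • x - β • ∑ i, (max 0 (g i x) / ‖d i‖ ^ 2) • d i := by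
      rw [Finset.sum_sub_distrib, Finset.smul_sum]
      simp [mul_smul, card_univ, ← Nat.cast_smul_eq_nsmul ℝ]
    have hone : (1/(N:ℝ)) * N = 1 := by field_simp
    rw [h1, smul_sub, smul_smul, hone, one_smul, smul_comm, hv]
  rw [hz]
  -- projection nonexpansive at y
  set z : EuclideanSpace ℝ (Fin n) := x - β • v with hzdef
  haveI : Nonempty ↑Y := ⟨⟨y, hyY⟩⟩
  have hproj : ‖P z - y‖ ^ 2 ≤ ‖z - y‖ ^ 2 := by
    have hinf : ‖z - P z‖ = ⨅ w : Y, ‖z - w‖ := by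
      apply le_antisymm
      · apply le_ciInf
        intro w
        rw [norm_sub_rev]
        have := (hP z).2 w w.2
        rwa [norm_sub_rev z w]
      · have hb : BddBelow (Set.range fun w : Y => ‖z - (w : EuclideanSpace ℝ (Fin n))‖) := by
          refine ⟨0, ?_⟩
          rintro r ⟨w, rfl⟩
          exact norm_nonneg _
        exact ciInf_le hb ⟨P z, (hP z).1⟩
    have hvi := (norm_eq_iInf_iff_real_inner_le_zero hYconv (hP z).1).mp hinf y hyY
    have hexp : ‖z - y‖ ^ 2
        = ‖z - P z‖ ^ 2 + ‖P z - y‖ ^ 2 + 2 * inner ℝ (z - P z) (P z - y) := by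
      have : z - y = (z - P z) + (P z - y) := by abel
      rw [this, norm_add_sq_real]; ring
    have hnn : (0:ℝ) ≤ inner ℝ (z - P z) (P z - y) := by
      have : inner ℝ (z - P z) (P z - y) = -(inner ℝ (z - P z) (y - P z) : ℝ) := by
        rw [← inner_neg_right]; congr 1; abel
      rw [this]; linarith
    nlinarith [sq_nonneg ‖z - P z‖]
  refine hproj.trans ?_
  -- expand the square
  have hexp : ‖z - y‖ ^ 2 = ‖x - y‖ ^ 2 - 2 * β * inner ℝ (x - y) v + β ^ 2 * ‖v‖ ^ 2 := by
    have h1 : z - y = (x - y) - β • v := by rw [hzdef]; abel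
    rw [h1, norm_sub_sq_real, real_inner_smul_right, norm_smul]
    rw [mul_pow]
    have : |β| = β := abs_of_pos hβ
    simp [Real.norm_eq_abs, this]
    ring
  rw [hexp]
  -- key inequality: inner ℝ (x-y) v ≥ (1/N) * ∑ gp^2/‖d‖^2
  have hkey : (1 / (N:ℝ)) * ∑ i, (max 0 (g i x)) ^ 2 / ‖d i‖ ^ 2 ≤ inner ℝ (x - y) v := by
    rw [hv, real_inner_smul_right, inner_sum]
    apply mul_le_mul_of_nonneg_left _ (by positivity)
    apply Finset.sum_le_sum
    intro i _
    rw [real_inner_smul_right]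
    rcases lt_or_ge 0 (max 0 (g i x)) with hpos | hle
    · have hsubi := (hd i)
      rw [if_pos hpos] at hsubi
      have h1 := hsubi y
      have h2 : max 0 (g i y) = 0 := max_eq_left (hXneg i y hy)
      rw [h2] at h1
      have h3 : (inner ℝ (d i) (y - x) : ℝ) = -(inner ℝ (x - y) (d i) : ℝ) := by
        rw [real_inner_comm]; rw [← inner_neg_left]; congr 1; abel
      rw [h3] at h1
      -- max 0 (g i x) ≤ inner ℝ (x-y) (d i)
      have h4 : max 0 (g i x) ≤ (inner ℝ (x - y) (d i) : ℝ) := by linarith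
      have hd2 : (0:ℝ) < ‖d i‖ ^ 2 := by
        have hdne : d i ≠ 0 := by
          intro h0
          rw [h0] at h1
          simp at h1
          rw [max_eq_left h1] at hpos
          exact lt_irrefl 0 hpos
        exact pow_pos (norm_pos_iff.mpr hdne) 2
      rw [div_mul_eq_mul_div, sq, div_le_div_iff₀ hd2 hd2]
      nlinarith [mul_le_mul_of_nonneg_left h4 hpos.le, hd2.le]
    · have h0 : max 0 (g i x) = 0 := by
        have h5 := le_max_left 0 (g i x)
        linarith
      rw [h0]
      simp
  have hS : 0 ≤ ∑ i, (max 0 (g i x)) ^ 2 / ‖d i‖ ^ 2 :=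
    Finset.sum_nonneg fun i _ => div_nonneg (sq_nonneg _) (sq_nonneg _)
  have : 2 * (β / (N:ℝ)) * ∑ i, (max 0 (g i x)) ^ 2 / ‖d i‖ ^ 2
      ≤ 2 * β * inner ℝ (x - y) v := by
    have := mul_le_mul_of_nonneg_left hkey (by linarith : (0:ℝ) ≤ 2 * β)
    calc 2 * (β / (N:ℝ)) * ∑ i, (max 0 (g i x)) ^ 2 / ‖d i‖ ^ 2
        = 2 * β * ((1 / (N:ℝ)) * ∑ i, (max 0 (g i x)) ^ 2 / ‖d i‖ ^ 2) := by ring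
      _ ≤ 2 * β * inner ℝ (x - y) v := this
  linarith
end
end

section
/- In the setting of the minibatch averaged-step inequality, suppose additionally that ‖(1/N)Σ_i (g_i⁺(x)/‖d^i‖²) d^i‖² ≤ L_N · (1/N)Σ_i (g_i⁺(x))²/‖d^i‖² for some L_N ∈ (0,1], that ‖d^i‖ ≤ M_g for all i, and that β ∈ (0, 2/L_N). Then for every y ∈ X*: ‖x⁺ − y‖² ≤ ‖x − y‖² − (β(2 − β L_N)/M_g²) · (1/N)Σ_{i=1}^N (g_i⁺(x))². -/
set_option maxHeartbeats 800000


open Finset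

noncomputable section

/-- Minibatch descent with extrapolated stepsize `β ∈ (0, 2/L_N)` (Lemma 6, per-sample form). -/
theorem stmt_11 {n N : ℕ} (hN : 0 < N)
    (g : Fin N → EuclideanSpace ℝ (Fin n) → ℝ)
    (hg : ∀ i, ConvexOn ℝ Set.univ (g i))
    (Y : Set (EuclideanSpace ℝ (Fin n))) (hYclosed : IsClosed Y) (hYconv : Convex ℝ Y)
    (M LN : ℝ) (hM : 0 < M) (hLN : LN ∈ Set.Ioc (0 : ℝ) 1)
    (Xs : Set (EuclideanSpace ℝ (Fin n))) (hXsY : Xs ⊆ Y) (hXsne : Xs.Nonempty)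
    (hXsclosed : IsClosed Xs) (hXsconv : Convex ℝ Xs)
    (hXneg : ∀ i, ∀ z ∈ Xs, g i z ≤ 0)
    (P : EuclideanSpace ℝ (Fin n) → EuclideanSpace ℝ (Fin n))
    (hP : ∀ v, P v ∈ Y ∧ ∀ w ∈ Y, ‖P v - v‖ ≤ ‖w - v‖)
    (x : EuclideanSpace ℝ (Fin n)) (hx : x ∈ Y)
    (β : ℝ) (hβ : β ∈ Set.Ioo (0 : ℝ) (2 / LN))
    (d : Fin N → EuclideanSpace ℝ (Fin n))
    (hd : ∀ i, if 0 < max 0 (g i x) then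
        (∀ v, max 0 (g i x) + (inner ℝ (d i) (v - x) : ℝ) ≤ max 0 (g i v))
      else d i ≠ 0)
    (hdM : ∀ i, ‖d i‖ ≤ M)
    (hLNbound : ‖(1 / (N : ℝ)) • ∑ i, (max 0 (g i x) / ‖d i‖ ^ 2) • d i‖ ^ 2 ≤
      LN * ((1 / (N : ℝ)) * ∑ i, (max 0 (g i x)) ^ 2 / ‖d i‖ ^ 2)) :
    ∀ y ∈ Xs,
      ‖P ((1 / (N : ℝ)) • ∑ i, (x - (β * (max 0 (g i x) / ‖d i‖ ^ 2)) • d i)) - y‖ ^ 2 ≤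
        ‖x - y‖ ^ 2 -
          (β * (2 - β * LN) / M ^ 2) * ((1 / (N : ℝ)) * ∑ i, (max 0 (g i x)) ^ 2) := by
  intro y hy
  obtain ⟨hLN0, hLN1⟩ := hLN
  obtain ⟨hβ0, hβ2⟩ := hβ
  have hβLN : β * LN < 2 := by
    have := (lt_div_iff₀ hLN0).mp hβ2
    linarith
  -- d i ≠ 0 for all i
  have hdne : ∀ i, d i ≠ 0 := by
    intro i h0
    have h := hd i
    by_cases hpos : 0 < max 0 (g i x)
    · rw [if_pos hpos] at h
      obtain ⟨z0, hz0⟩ := hXsne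
      have h1 := h z0
      rw [h0, inner_zero_left] at h1
      have h2 : max 0 (g i z0) = 0 := max_eq_left (hXneg i z0 hz0)
      rw [h2] at h1
      linarith
    · rw [if_neg hpos] at h; exact h h0
  have hdpos : ∀ i, (0:ℝ) < ‖d i‖ := fun i => norm_pos_iff.mpr (hdne i)
  set v : EuclideanSpace ℝ (Fin n) :=
    (1 / (N : ℝ)) • ∑ i, (max 0 (g i x) / ‖d i‖ ^ 2) • d i with hv
  have hNpos : (0:ℝ) < (N:ℝ) := by exact_mod_cast hN
  -- rewrite the argument of P
  have hz : (1 / (N : ℝ)) • ∑ i, (x - (β * (max 0 (g i x) / ‖d i‖ ^ 2)) • d i)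
      = x - β • v := by
    rw [Finset.sum_sub_distrib, smul_sub, Finset.sum_const, card_univ, Fintype.card_fin]
    congr 1
    · rw [← Nat.cast_smul_eq_nsmul ℝ, smul_smul, one_div, inv_mul_cancel₀ (ne_of_gt hNpos),
        one_smul]
    · rw [hv, smul_comm]
      congr 1
      rw [Finset.smul_sum]
      exact Finset.sum_congr rfl fun i _ => by rw [smul_smul]
  rw [hz]
  set z := x - β • v with hzdef
  have hyY : y ∈ Y := hXsY hy
  -- projection is "firmly" closer: ‖P z - y‖² ≤ ‖z - y‖²
  have hprojsq : ‖P z - y‖ ^ 2 ≤ ‖z - y‖ ^ 2 := by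
    have h1 : P z ∈ Y := (hP z).1
    have hne : Nonempty ↥Y := ⟨⟨P z, h1⟩⟩
    have hiInf : ‖z - P z‖ = ⨅ w : Y, ‖z - w‖ := by
      apply le_antisymm
      · exact le_ciInf fun w => by
          rw [norm_sub_rev z, norm_sub_rev z]; exact (hP z).2 w w.2
      · exact ciInf_le ⟨0, fun r ⟨w, hw⟩ => hw ▸ norm_nonneg _⟩ (⟨P z, h1⟩ : Y)
    have hobt : ∀ w ∈ Y, (inner ℝ (z - P z) (w - P z) : ℝ) ≤ 0 :=
      (norm_eq_iInf_iff_real_inner_le_zero hYconv h1).mp hiInf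
    have hyo := hobt y hyY
    have hdecomp : z - y = (z - P z) + (P z - y) := by abel
    have := norm_add_sq_real (z - P z) (P z - y)
    rw [← hdecomp] at this
    have hin : (inner ℝ (z - P z) (P z - y) : ℝ) = - (inner ℝ (z - P z) (y - P z) : ℝ) := by
      rw [← inner_neg_right]; congr 1; abel
    nlinarith [sq_nonneg ‖z - P z‖]
  -- per-term subgradient inequality
  have hterm : ∀ i, (max 0 (g i x)) ^ 2 / ‖d i‖ ^ 2 ≤
      (max 0 (g i x) / ‖d i‖ ^ 2) * (inner ℝ (d i) (x - y) : ℝ) := by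
    intro i
    by_cases hpos : 0 < max 0 (g i x)
    · have h := hd i
      rw [if_pos hpos] at h
      have h1 := h y
      have h2 : max 0 (g i y) = 0 := max_eq_left (hXneg i y hy)
      rw [h2] at h1
      have hin : (inner ℝ (d i) (y - x) : ℝ) = - (inner ℝ (d i) (x - y) : ℝ) := by
        rw [← inner_neg_right]; congr 1; abel
      rw [hin] at h1
      have hge : max 0 (g i x) ≤ (inner ℝ (d i) (x - y) : ℝ) := by linarith
      have hd2 : (0:ℝ) < ‖d i‖ ^ 2 := pow_pos (hdpos i) 2
      rw [div_mul_eq_mul_div, div_le_div_iff₀ hd2 hd2]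
      have : max 0 (g i x) * max 0 (g i x) ≤ max 0 (g i x) * (inner ℝ (d i) (x - y) : ℝ) :=
        mul_le_mul_of_nonneg_left hge (le_of_lt hpos)
      nlinarith [sq_nonneg ‖d i‖]
    · have h0 : max 0 (g i x) = 0 := le_antisymm (not_lt.mp hpos) (le_max_left _ _)
      rw [h0]; simp
  set S : ℝ := (1 / (N : ℝ)) * ∑ i, (max 0 (g i x)) ^ 2 / ‖d i‖ ^ 2 with hS
  set T : ℝ := (1 / (N : ℝ)) * ∑ i, (max 0 (g i x)) ^ 2 with hT
  have hinner : S ≤ (inner ℝ v (x - y) : ℝ) := by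
    rw [hv, real_inner_smul_left, sum_inner]
    have : ∀ i ∈ Finset.univ, (max 0 (g i x)) ^ 2 / ‖d i‖ ^ 2 ≤
        (inner ℝ ((max 0 (g i x) / ‖d i‖ ^ 2) • d i) (x - y) : ℝ) := by
      intro i _
      rw [real_inner_smul_left]
      exact hterm i
    have hsum := Finset.sum_le_sum this
    rw [hS]
    apply mul_le_mul_of_nonneg_left hsum (by positivity)
  have hSnonneg : 0 ≤ S := by
    rw [hS]
    exact mul_nonneg (by positivity)
      (Finset.sum_nonneg fun i _ => div_nonneg (sq_nonneg _) (sq_nonneg _))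
  have hTS : T / M ^ 2 ≤ S := by
    have e : T / M ^ 2 = (1 / (N : ℝ)) * ∑ i, (max 0 (g i x)) ^ 2 / M ^ 2 := by
      rw [hT, mul_div_assoc, Finset.sum_div]
    rw [e, hS]
    apply mul_le_mul_of_nonneg_left _ (by positivity)
    apply Finset.sum_le_sum
    intro i _
    apply div_le_div_of_nonneg_left (by positivity) (pow_pos (hdpos i) 2)
    have := hdM i
    nlinarith [hdpos i]
  -- expand ‖z - y‖²
  have hzy : ‖z - y‖ ^ 2 = ‖x - y‖ ^ 2 - 2 * β * (inner ℝ v (x - y) : ℝ) + β ^ 2 * ‖v‖ ^ 2 := by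
    have hd2 : z - y = (x - y) - β • v := by rw [hzdef]; abel
    rw [hd2, norm_sub_sq_real, real_inner_smul_right, norm_smul, mul_pow, Real.norm_eq_abs,
      sq_abs, real_inner_comm]
    ring
  have hvsq : ‖v‖ ^ 2 ≤ LN * S := hLNbound
  have hkey : ‖z - y‖ ^ 2 ≤ ‖x - y‖ ^ 2 - β * (2 - β * LN) * S := by
    rw [hzy]
    have h1 : 2 * β * S ≤ 2 * β * (inner ℝ v (x - y) : ℝ) := by
      apply mul_le_mul_of_nonneg_left hinner (by linarith)
    have h2 : β ^ 2 * ‖v‖ ^ 2 ≤ β ^ 2 * (LN * S) := by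
      apply mul_le_mul_of_nonneg_left hvsq (by positivity)
    nlinarith
  have hfinal : β * (2 - β * LN) * (T / M ^ 2) ≤ β * (2 - β * LN) * S := by
    apply mul_le_mul_of_nonneg_left hTS
    nlinarith
  have : (β * (2 - β * LN) / M ^ 2) * T = β * (2 - β * LN) * (T / M ^ 2) := by ring
  rw [this]
  nlinarith
end
end

section
/- Consider the minibatch iteration x_{k+1} = Π_Y[(1/N)Σ_{i=1}^N (x_k − β_k (g_{ω_k^i}⁺(x_k)/‖d_k^i‖²) d_k^i)] with adaptive stepsize β_k = (2 − δ)/L_N^k, where δ ∈ (0,2) and L_N^k = ‖(1/N)Σ_i (g_{ω_k^i}⁺(x_k)/‖d_k^i‖²) d_k^i‖² / ((1/N)Σ_i (g_{ω_k^i}⁺(x_k))²/‖d_k^i‖²) (with 0/0 := 0). If ‖d_k^i‖ ≤ M_g, each g_ω ≤ 0 on the nonempty closed convex X* ⊆ Y, and L_N^k ≤ L_N for all k, then for every y ∈ X*: ‖x_{k+1} − y‖² ≤ ‖x_k − y‖² − (δ(2−δ)/(L_N M_g²)) · (1/N)Σ_{i=1}^N (g_{ω_k^i}⁺(x_k))²,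 whenever some g_{ω_k^i}(x_k) > 0. -/
open Finset

noncomputable section

set_option maxHeartbeats 1600000 in
/-- Minibatch descent with the adaptive extrapolated stepsize `β_k = (2-δ)/L_N^k` (Lemma 7). -/
theorem stmt_15 {n N : ℕ} (hN : 0 < N)
    (g : Fin N → EuclideanSpace ℝ (Fin n) → ℝ)
    (hg : ∀ i, ConvexOn ℝ Set.univ (g i))
    (Y : Set (EuclideanSpace ℝ (Fin n))) (hYclosed : IsClosed Y) (hYconv : Convex ℝ Y)
    (M δ LN : ℝ) (hM : 0 < M) (hδ : δ ∈ Set.Ioo (0 : ℝ) 2)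
    (Xs : Set (EuclideanSpace ℝ (Fin n))) (hXsY : Xs ⊆ Y) (hXsne : Xs.Nonempty)
    (hXsclosed : IsClosed Xs) (hXsconv : Convex ℝ Xs)
    (hXneg : ∀ i, ∀ z ∈ Xs, g i z ≤ 0)
    (P : EuclideanSpace ℝ (Fin n) → EuclideanSpace ℝ (Fin n))
    (hP : ∀ v, P v ∈ Y ∧ ∀ w ∈ Y, ‖P v - v‖ ≤ ‖w - v‖)
    (x : EuclideanSpace ℝ (Fin n)) (hx : x ∈ Y)
    (d : Fin N → EuclideanSpace ℝ (Fin n))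
    (hd : ∀ i, if 0 < max 0 (g i x) then
        (∀ v, max 0 (g i x) + (inner ℝ (d i) (v - x) : ℝ) ≤ max 0 (g i v))
      else d i ≠ 0)
    (hdM : ∀ i, ‖d i‖ ≤ M)
    (hpos : ∃ i, 0 < g i x)
    (LNk : ℝ)
    (hLNk : LNk = ‖(1 / (N : ℝ)) • ∑ i, (max 0 (g i x) / ‖d i‖ ^ 2) • d i‖ ^ 2 /
      ((1 / (N : ℝ)) * ∑ i, (max 0 (g i x)) ^ 2 / ‖d i‖ ^ 2))
    (hLNkpos : 0 < LNk) (hLNkLN : LNk ≤ LN) :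
    ∀ y ∈ Xs,
      ‖P ((1 / (N : ℝ)) •
          ∑ i, (x - ((2 - δ) / LNk * (max 0 (g i x) / ‖d i‖ ^ 2)) • d i)) - y‖ ^ 2 ≤
        ‖x - y‖ ^ 2 -
          (δ * (2 - δ) / (LN * M ^ 2)) * ((1 / (N : ℝ)) * ∑ i, (max 0 (g i x)) ^ 2) := by
  intro y hy
  have hyY : y ∈ Y := hXsY hy
  obtain ⟨hδ0, hδ2⟩ := hδ
  have hNpos : (0 : ℝ) < N := Nat.cast_pos.mpr hN
  have hLNpos : 0 < LN := lt_of_lt_of_le hLNkpos hLNkLN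
  set G : Fin N → ℝ := fun i => max 0 (g i x) with hG
  set s : EuclideanSpace ℝ (Fin n) := (1 / (N : ℝ)) • ∑ i, (G i / ‖d i‖ ^ 2) • d i with hs
  set A : ℝ := (1 / (N : ℝ)) * ∑ i, (G i) ^ 2 / ‖d i‖ ^ 2 with hA
  set β : ℝ := (2 - δ) / LNk with hβ
  have hβpos : 0 < β := div_pos (by linarith) hLNkpos
  -- the point fed to P equals x - β • s
  have hz : (1 / (N : ℝ)) • ∑ i, (x - (β * (G i / ‖d i‖ ^ 2)) • d i)
      = x - β • s := by
    rw [Finset.sum_sub_distrib, smul_sub, Finset.sum_const, card_univ, Fintype.card_fin]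
    congr 1
    · rw [← Nat.cast_smul_eq_nsmul ℝ N x, smul_smul, one_div,
        inv_mul_cancel₀ (ne_of_gt hNpos), one_smul]
    · rw [hs, smul_comm β ((1:ℝ) / N)]
      congr 1
      rw [Finset.smul_sum]
      exact Finset.sum_congr rfl fun i _ => (smul_smul β _ _).symm
  -- A > 0
  have hAnonneg : (0:ℝ) ≤ ∑ i, (G i) ^ 2 / ‖d i‖ ^ 2 :=
    Finset.sum_nonneg fun i _ => div_nonneg (sq_nonneg _) (sq_nonneg _)
  have hApos : 0 < A := by
    have h0 : (0:ℝ) ≤ A := by rw [hA]; exact mul_nonneg (by positivity) hAnonneg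
    rcases lt_or_eq_of_le h0 with h | h
    · exact h
    · exfalso
      rw [← h, div_zero] at hLNk
      exact absurd hLNk (ne_of_gt hLNkpos)
  -- ‖s‖² = LNk * A
  have hsA : ‖s‖ ^ 2 = LNk * A := by
    rw [hLNk, div_mul_cancel₀ _ (ne_of_gt hApos)]
  -- active subgradient inequality at y, and nonvanishing of active d i
  have hact : ∀ i, 0 < G i → G i ≤ (inner ℝ (d i) (x - y) : ℝ) ∧ 0 < ‖d i‖ := by
    intro i h
    have hsub := hd i
    rw [if_pos h] at hsub
    have h1 := hsub y
    have h2 : max 0 (g i y) = 0 := max_eq_left (hXneg i y hy)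
    rw [h2] at h1
    have h3 : G i ≤ (inner ℝ (d i) (x - y) : ℝ) := by
      have hne : (inner ℝ (d i) (y - x) : ℝ) = -(inner ℝ (d i) (x - y) : ℝ) := by
        rw [← inner_neg_right]; congr 1; abel
      rw [hne] at h1; linarith
    refine ⟨h3, ?_⟩
    rw [norm_pos_iff]
    intro h0
    rw [h0, inner_zero_left] at h3
    linarith
  have hkey : ∀ i, (G i) ^ 2 / ‖d i‖ ^ 2 ≤ (G i / ‖d i‖ ^ 2) * (inner ℝ (d i) (x - y) : ℝ) := by
    intro i
    rcases le_or_gt (G i) 0 with h | h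
    · have h0 : G i = 0 := le_antisymm h (le_max_left _ _)
      simp [h0]
    · obtain ⟨h3, hdpos⟩ := hact i h
      have hd2 : (0:ℝ) < ‖d i‖ ^ 2 := pow_pos hdpos 2
      rw [div_mul_eq_mul_div, div_le_div_iff₀ hd2 hd2, pow_two (G i), mul_assoc]
      nlinarith [mul_le_mul_of_nonneg_left h3 (le_of_lt h)]
  -- ⟪s, x - y⟫ ≥ A
  have hsy : A ≤ (inner ℝ s (x - y) : ℝ) := by
    rw [hs, real_inner_smul_left, sum_inner, hA]
    apply mul_le_mul_of_nonneg_left _ (by positivity)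
    apply Finset.sum_le_sum
    intro i _
    rw [real_inner_smul_left]
    exact hkey i
  -- expansion of the squared norm
  have hexp : ‖(x - β • s) - y‖ ^ 2
      = ‖x - y‖ ^ 2 - 2 * β * (inner ℝ s (x - y) : ℝ) + β ^ 2 * ‖s‖ ^ 2 := by
    have h1 : (x - β • s) - y = (x - y) - β • s := by abel
    rw [h1, norm_sub_sq_real, real_inner_smul_right, norm_smul, mul_pow, real_inner_comm]
    simp [sq_abs]
    ring
  -- projection inequality
  have hproj : ∀ u, ∀ w ∈ Y, ‖P u - w‖ ^ 2 ≤ ‖u - w‖ ^ 2 := by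
    intro u w hw
    haveI : Nonempty Y := ⟨⟨hXsne.choose, hXsY hXsne.choose_spec⟩⟩
    have hinf : ‖u - P u‖ = ⨅ w : Y, ‖u - w‖ := by
      apply le_antisymm
      · apply le_ciInf
        intro z
        rw [norm_sub_rev u (P u), norm_sub_rev u z]
        exact (hP u).2 z z.2
      · have hbdd : BddBelow (Set.range fun w : Y => ‖u - w‖) := by
          refine ⟨0, ?_⟩
          rintro _ ⟨w, rfl⟩
          exact norm_nonneg _
        exact ciInf_le hbdd ⟨P u, (hP u).1⟩
    have hvar := (norm_eq_iInf_iff_real_inner_le_zero hYconv (hP u).1).mp hinf w hw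
    have hdecomp : u - w = (u - P u) + (P u - w) := by abel
    have hexpand : ‖u - w‖ ^ 2
        = ‖u - P u‖ ^ 2 + 2 * (inner ℝ (u - P u) (P u - w) : ℝ) + ‖P u - w‖ ^ 2 := by
      rw [hdecomp, norm_add_sq_real]
    have hflip : (inner ℝ (u - P u) (P u - w) : ℝ) = -(inner ℝ (u - P u) (w - P u) : ℝ) := by
      rw [← inner_neg_right]; congr 1; abel
    nlinarith [sq_nonneg ‖u - P u‖]
  -- combine
  have hmain : ‖(x - β • s) - y‖ ^ 2 ≤ ‖x - y‖ ^ 2 - (δ * (2 - δ) / LNk) * A := by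
    rw [hexp, hsA]
    have hcoef : 2 * β - β ^ 2 * LNk = δ * (2 - δ) / LNk := by
      rw [hβ]
      field_simp
      ring
    have h1 : 2 * β * A ≤ 2 * β * (inner ℝ s (x - y) : ℝ) :=
      mul_le_mul_of_nonneg_left hsy (by positivity)
    have h2 : β ^ 2 * (LNk * A) = (2 * β - δ * (2 - δ) / LNk) * A := by
      linear_combination (-A) * hcoef
    linarith
  -- lower bound on A
  have hterm : ∀ i, (G i) ^ 2 / M ^ 2 ≤ (G i) ^ 2 / ‖d i‖ ^ 2 := by
    intro i
    rcases le_or_gt (G i) 0 with h | h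
    · have h0 : G i = 0 := le_antisymm h (le_max_left _ _)
      simp [h0]
    · obtain ⟨_, hdpos⟩ := hact i h
      have h2 : (0:ℝ) < ‖d i‖ ^ 2 := pow_pos hdpos 2
      have hdM' : ‖d i‖ ^ 2 ≤ M ^ 2 := pow_le_pow_left₀ (norm_nonneg _) (hdM i) 2
      rw [div_le_div_iff₀ (pow_pos hM 2) h2]
      exact mul_le_mul_of_nonneg_left hdM' (sq_nonneg _)
  have hAS : ((1 / (N : ℝ)) * ∑ i, (G i) ^ 2) / M ^ 2 ≤ A := by
    have h1 : ((1 / (N : ℝ)) * ∑ i, (G i) ^ 2) / M ^ 2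
        = (1 / (N : ℝ)) * ∑ i, (G i) ^ 2 / M ^ 2 := by
      rw [← Finset.sum_div]; ring
    rw [h1, hA]
    exact mul_le_mul_of_nonneg_left (Finset.sum_le_sum fun i _ => hterm i) (by positivity)
  have hfinal : (δ * (2 - δ) / (LN * M ^ 2)) * ((1 / (N : ℝ)) * ∑ i, (G i) ^ 2)
      ≤ (δ * (2 - δ) / LNk) * A := by
    have h1 : (δ * (2 - δ) / (LN * M ^ 2)) * ((1 / (N : ℝ)) * ∑ i, (G i) ^ 2)
        = (δ * (2 - δ) / LN) * (((1 / (N : ℝ)) * ∑ i, (G i) ^ 2) / M ^ 2) := by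
      ring
    rw [h1]
    have h2 : (δ * (2 - δ) / LN) * (((1 / (N : ℝ)) * ∑ i, (G i) ^ 2) / M ^ 2)
        ≤ (δ * (2 - δ) / LN) * A :=
      mul_le_mul_of_nonneg_left hAS (div_nonneg (mul_nonneg hδ0.le (by linarith)) hLNpos.le)
    refine h2.trans ?_
    apply mul_le_mul_of_nonneg_right _ (le_of_lt hApos)
    rw [div_le_div_iff₀ hLNpos hLNkpos]
    exact mul_le_mul_of_nonneg_left hLNkLN (by nlinarith)
  -- finish
  have hPz := hproj ((1 / (N : ℝ)) • ∑ i, (x - (β * (G i / ‖d i‖ ^ 2)) • d i)) y hyY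
  calc ‖P ((1 / (N : ℝ)) • ∑ i, (x - (β * (G i / ‖d i‖ ^ 2)) • d i)) - y‖ ^ 2
      ≤ ‖((1 / (N : ℝ)) • ∑ i, (x - (β * (G i / ‖d i‖ ^ 2)) • d i)) - y‖ ^ 2 := hPz
    _ = ‖(x - β • s) - y‖ ^ 2 := by rw [hz]
    _ ≤ ‖x - y‖ ^ 2 - (δ * (2 - δ) / LNk) * A := hmain
    _ ≤ ‖x - y‖ ^ 2 - (δ * (2 - δ) / (LN * M ^ 2)) * ((1 / (N : ℝ)) * ∑ i, (G i) ^ 2) := by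
        linarith
end
end
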